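/- arXiv:1107.1860 — 3 statements merged into one kernel-verified Lean document; each statement's English description precedes it below -/
import Mathlib

section
/- The subspace A' = ker φ ∩ ker π of S^2V ⊗ V has dimension (m³ − 4m)/3 where m = dim V = 2n, i.e. dim A' = (8/3)(n³ − n). -/
/-!
Products of `p` linear forms span the degree-`p` monomials, so `S²V ⊗ V` has dimension
`C(m+1, 2) · m`, and `π`, being `1/3` times multiplication, maps it onto `S³V`, of dimension
`C(m+2, 3)`. The differences `ab ⊗ c - ac ⊗ b` lie in `ker π`, and `φ` sends them to
`ω(a,c) b + 2 ω(b,c) a - ω(a,b) c`; once `ω(b,c) = 1/2` these span `V`, so `φ` still maps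
`ker π` onto `V`. Rank–nullity twice gives
`dim 𝒜' = C(m+1,2) m - C(m+2,3) - m = (m³ - 4m)/3`.
-/

open TensorProduct

noncomputable section

/-- A vector of `ℝᵐ` viewed as a degree-one element of the symmetric algebra. -/
def lin {m : ℕ} (v : Fin m → ℝ) : MvPolynomial (Fin m) ℝ :=
  ∑ i, MvPolynomial.C (v i) * MvPolynomial.X i

/-- The decomposable symmetric tensor `u 0 ⋯ u (p-1) ∈ SᵖV`. -/
def symProd {m p : ℕ} (u : Fin p → Fin m → ℝ) : MvPolynomial (Fin m) ℝ :=
  ∏ i, lin (u i)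

/-- The decomposable alternating tensor `v 0 ∧ ⋯ ∧ v (q-1) ∈ ΛᵠV`. -/
def wdg {m q : ℕ} (v : Fin q → Fin m → ℝ) : ExteriorAlgebra ℝ (Fin m → ℝ) :=
  (List.ofFn fun j => ExteriorAlgebra.ι ℝ (v j)).prod

/-- The model for `⊕_{p,q} SᵖV ⊗ ΛᵠV`. -/
abbrev MM (m : ℕ) :=
  MvPolynomial (Fin m) ℝ ⊗[ℝ] ExteriorAlgebra ℝ (Fin m → ℝ)

/-- The decomposable element `u 0 ⋯ u (p-1) ⊗ v 0 ∧ ⋯ ∧ v (q-1)` of `SᵖV ⊗ ΛᵠV`. -/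
def dec {m p q : ℕ} (u : Fin p → Fin m → ℝ) (v : Fin q → Fin m → ℝ) : MM m :=
  symProd u ⊗ₜ[ℝ] wdg v

/-- The subspace `SᵖV ⊗ ΛᵠV` of the model, spanned by the decomposable
elements. -/
def piece (m p q : ℕ) : Submodule ℝ (MM m) :=
  Submodule.span ℝ
    {x | ∃ u : Fin p → Fin m → ℝ, ∃ v : Fin q → Fin m → ℝ, x = dec u v}

open MvPolynomial Module Submodule

section Monomials

variable {m p : ℕ}

theorem lin_eq_sum_smul (v : Fin m → ℝ) :
    lin v = ∑ i, v i • (X i : MvPolynomial (Fin m) ℝ) := by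
  simp [lin, smul_eq_C_mul]

theorem lin_single (i : Fin m) : lin (Pi.single i 1) = X i := by
  simp [lin_eq_sum_smul, Pi.single_apply]

def symMonomial (s : Sym (Fin m) p) : MvPolynomial (Fin m) ℝ :=
  monomial (Multiset.toFinsupp (s : Multiset (Fin m))) 1

theorem symMonomial_cons (i : Fin m) (s : Sym (Fin m) p) :
    symMonomial (i ::ₛ s) = X i * symMonomial s := by
  rw [symMonomial, symMonomial, X, monomial_mul, one_mul, Sym.coe_cons, ← Multiset.singleton_add,
    Multiset.toFinsupp_add, Multiset.toFinsupp_singleton]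

theorem linearIndependent_symMonomial : LinearIndependent ℝ (symMonomial (m := m) (p := p)) :=
  (basisMonomials (Fin m) ℝ).linearIndependent.comp _
    fun _ _ h => Sym.coe_injective (Multiset.toFinsupp.injective h)

theorem symProd_cons (v : Fin m → ℝ) (u : Fin p → Fin m → ℝ) :
    symProd (Fin.cons v u) = lin v * symProd u := by
  simp [symProd, Fin.prod_univ_succ]

theorem symMonomial_eq_symProd (s : Sym (Fin m) p) :
    ∃ u : Fin p → Fin m → ℝ, symMonomial s = symProd u := by
  induction p with
  | zero => exact ⟨Fin.elim0, by simp [symMonomial, symProd, Sym.eq_nil_of_card_zero s]⟩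
  | succ p ih =>
    obtain ⟨i, s, rfl⟩ := s.exists_eq_cons_of_succ
    obtain ⟨u, hu⟩ := ih s
    exact ⟨Fin.cons (Pi.single i 1) u, by rw [symMonomial_cons, symProd_cons, lin_single, hu]⟩

theorem symProd_mem_span_symMonomial (u : Fin p → Fin m → ℝ) :
    symProd u ∈ span ℝ (Set.range (symMonomial (m := m) (p := p))) := by
  induction p with
  | zero => exact subset_span ⟨Sym.nil, by simp [symMonomial, symProd]⟩
  | succ p ih =>
    rw [← Fin.cons_self_tail u, symProd_cons, lin_eq_sum_smul, Finset.sum_mul]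
    refine sum_mem fun i _ => ?_
    rw [smul_mul_assoc]
    refine smul_mem _ _ ?_
    have : span ℝ (Set.range (symMonomial (m := m) (p := p))) ≤
        (span ℝ (Set.range (symMonomial (m := m) (p := p + 1)))).comap
          (LinearMap.mulLeft ℝ (X i)) := by
      rw [span_le]
      rintro _ ⟨s, rfl⟩
      exact subset_span ⟨i ::ₛ s, symMonomial_cons i s⟩
    exact this (ih _)

theorem span_range_symProd :
    span ℝ (Set.range (symProd (m := m) (p := p))) =
      span ℝ (Set.range (symMonomial (m := m) (p := p))) := by
  apply le_antisymm <;> rw [span_le] <;> rintro _ ⟨x, rfl⟩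
  · exact symProd_mem_span_symMonomial x
  · obtain ⟨u, hu⟩ := symMonomial_eq_symProd x
    exact hu ▸ subset_span ⟨u, rfl⟩

theorem finrank_span_range_symProd :
    finrank ℝ (span ℝ (Set.range (symProd (m := m) (p := p)))) = (m + p - 1).choose p := by
  rw [span_range_symProd, finrank_span_eq_card linearIndependent_symMonomial,
    Sym.card_sym_eq_choose, Fintype.card_fin]

end Monomials

section LinearAlgebra

variable {K V : Type*} [Field K] [AddCommGroup V] [Module K V]

theorem finrank_map₂_mk {P Q : Type*} [AddCommGroup P] [Module K P] [AddCommGroup Q] [Module K Q]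
    (p : Submodule K P) (q : Submodule K Q) [FiniteDimensional K p] [FiniteDimensional K q] :
    finrank K (map₂ (TensorProduct.mk K P Q) p q) = finrank K p * finrank K q := by
  rw [← TensorProduct.range_mapIncl,
    LinearMap.finrank_range_of_inj (Module.Flat.tensorProduct_mapIncl_injective_of_right p q),
    Module.finrank_tensorProduct]

theorem Submodule.finrank_map_add_finrank_inf_ker {N : Type*} [AddCommGroup N] [Module K N]
    (W : Submodule K V) [FiniteDimensional K W] (f : V →ₗ[K] N) :
    finrank K (W.map f) + finrank K ↥(W ⊓ LinearMap.ker f) = finrank K W := by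
  have h := LinearMap.finrank_range_add_finrank_ker (f.domRestrict W)
  rwa [LinearMap.range_domRestrict, LinearMap.ker_domRestrict,
    ← finrank_map_subtype_eq, map_comap_subtype] at h

theorem eq_top_of_forall_triple_mem [CharZero K] {ω : V →ₗ[K] V →ₗ[K] K} (halt : ω.IsAlt)
    (hsep : ω.SeparatingLeft) (I : Submodule K V)
    (hI : ∀ a b c, ω a c • b + (2 * ω b c) • a - ω a b • c ∈ I) :
    I = ⊤ := by
  rcases subsingleton_or_nontrivial V with _ | _
  · exact Subsingleton.elim _ _
  obtain ⟨b, hb⟩ := exists_ne (0 : V)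
  obtain ⟨c', hc'⟩ : ∃ c, ω b c ≠ 0 := by
    by_contra! h
    exact hb (hsep b h)
  set c := (2 * ω b c')⁻¹ • c'
  have hbc : ω b c = 2⁻¹ := by
    simp only [c, map_smul, smul_eq_mul]
    field_simp
  have hcb : ω c b = -2⁻¹ := by rw [← halt.neg, hbc]
  -- With `ω b c = 1/2`, the triples `(b, b, c)`, `(c, b, c)`, `(w, b, c)` give `(3/2) b`,
  -- `(3/2) c`, and `w` up to multiples of `b` and `c`.
  have hbI : b ∈ I := by
    have h := hI b b c
    rw [halt, hbc] at h
    convert I.smul_mem (2 / 3 : K) h using 1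
    module
  have hcI : c ∈ I := by
    have h := hI c b c
    rw [halt, hcb, hbc] at h
    convert I.smul_mem (2 / 3 : K) h using 1
    module
  refine eq_top_iff.2 fun w _ => ?_
  have h := hI w b c
  rw [hbc] at h
  convert I.add_mem (I.sub_mem h (I.smul_mem (ω w c) hbI)) (I.smul_mem (ω w b) hcI) using 1
  module

end LinearAlgebra

theorem three_mul_add_four_mul_eq_cube (m x : ℕ)
    (h : (m + 2).choose 3 + (m + x) = (m + 1).choose 2 * m) :
    3 * x + 4 * m = m ^ 3 := by
  have h2 : (m + 1) * m = (m + 1).choose 2 * 2 := by simpa using Nat.add_one_mul_choose_eq m 1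
  have h3 : (m + 2) * (m + 1).choose 2 = (m + 2).choose 3 * 3 := Nat.add_one_mul_choose_eq (m + 1) 2
  zify at h h2 h3 ⊢
  linear_combination 3 * h + h3 + (1 - m) * h2

section Pieces

variable {m : ℕ}

theorem piece_eq_map₂ (p q : ℕ) :
    piece m p q =
      map₂ (TensorProduct.mk ℝ _ _) (span ℝ (Set.range (symProd (m := m) (p := p))))
        (span ℝ (Set.range (wdg (m := m) (q := q)))) := by
  rw [map₂_span_span, piece]
  congr 1
  ext x
  simp [Set.mem_image2, dec, eq_comm]

theorem wdg_one (v : Fin 1 → Fin m → ℝ) : wdg v = ExteriorAlgebra.ι ℝ (v 0) := by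
  simp [wdg]

theorem span_range_wdg_one :
    span ℝ (Set.range (wdg (m := m) (q := 1))) = LinearMap.range (ExteriorAlgebra.ι ℝ) := by
  have : Set.range (wdg (m := m) (q := 1)) = Set.range (ExteriorAlgebra.ι ℝ) := by
    ext x
    simp only [Set.mem_range, wdg_one]
    exact ⟨fun ⟨v, hv⟩ => ⟨v 0, hv⟩, fun ⟨y, hy⟩ => ⟨fun _ => y, hy⟩⟩
  rw [this, ← LinearMap.coe_range, span_eq]

instance finiteDimensional_piece_one (p : ℕ) : FiniteDimensional ℝ (piece m p 1) := by
  have := FiniteDimensional.span_of_finite ℝ (Set.finite_range (symMonomial (m := m) (p := p)))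
  rw [piece_eq_map₂, span_range_symProd, span_range_wdg_one, ← TensorProduct.range_mapIncl]
  infer_instance

theorem finrank_piece_one (p : ℕ) : finrank ℝ (piece m p 1) = (m + p - 1).choose p * m := by
  have := FiniteDimensional.span_of_finite ℝ (Set.finite_range (symMonomial (m := m) (p := p)))
  rw [piece_eq_map₂, span_range_symProd, span_range_wdg_one, finrank_map₂_mk,
    finrank_span_eq_card linearIndependent_symMonomial, Sym.card_sym_eq_choose, Fintype.card_fin,
    LinearMap.finrank_range_of_inj ExteriorAlgebra.ι_leftInverse.injective, finrank_fin_fun]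

theorem dec_two_one (u : Fin 2 → Fin m → ℝ) (v : Fin 1 → Fin m → ℝ) :
    dec u v = (lin (u 0) * lin (u 1)) ⊗ₜ[ℝ] ExteriorAlgebra.ι ℝ (v 0) := by
  simp [dec, symProd, Fin.prod_univ_two, wdg_one]

theorem tmul_mem_piece_two_one (a b c : Fin m → ℝ) :
    (lin a * lin b) ⊗ₜ[ℝ] ExteriorAlgebra.ι ℝ c ∈ piece m 2 1 :=
  subset_span ⟨![a, b], ![c], by simp [dec_two_one]⟩

theorem map_piece_two_one (π : MM m →ₗ[ℝ] MvPolynomial (Fin m) ℝ)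
    (hπ : ∀ u₁ u₂ v : Fin m → ℝ,
      π ((lin u₁ * lin u₂) ⊗ₜ[ℝ] ExteriorAlgebra.ι ℝ v) =
        (1 / 3 : ℝ) • (lin u₁ * lin u₂ * lin v)) :
    map π (piece m 2 1) = span ℝ (Set.range (symProd (m := m) (p := 3))) := by
  rw [piece, map_span]
  apply le_antisymm <;> rw [span_le]
  · rintro _ ⟨_, ⟨u, v, rfl⟩, rfl⟩
    rw [dec_two_one, hπ]
    exact smul_mem _ _ (subset_span ⟨![u 0, u 1, v 0], by simp [symProd, Fin.prod_univ_three]⟩)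
  · rintro _ ⟨w, rfl⟩
    have hw : symProd w =
        (3 : ℝ) • π ((lin (w 0) * lin (w 1)) ⊗ₜ[ℝ] ExteriorAlgebra.ι ℝ (w 2)) := by
      rw [hπ, smul_smul]
      norm_num [symProd, Fin.prod_univ_three]
    rw [hw]
    exact smul_mem _ _ (subset_span ⟨_, ⟨![w 0, w 1], ![w 2], by simp [dec_two_one]⟩, rfl⟩)

theorem map_piece_two_one_inf_ker_eq_top
    (ω : (Fin m → ℝ) →ₗ[ℝ] (Fin m → ℝ) →ₗ[ℝ] ℝ) (halt : ω.IsAlt)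
    (hsep : ω.SeparatingLeft) (π : MM m →ₗ[ℝ] MvPolynomial (Fin m) ℝ)
    (hπ : ∀ u₁ u₂ v : Fin m → ℝ,
      π ((lin u₁ * lin u₂) ⊗ₜ[ℝ] ExteriorAlgebra.ι ℝ v) =
        (1 / 3 : ℝ) • (lin u₁ * lin u₂ * lin v))
    (φ : MM m →ₗ[ℝ] (Fin m → ℝ))
    (hφ : ∀ u₁ u₂ v : Fin m → ℝ,
      φ ((lin u₁ * lin u₂) ⊗ₜ[ℝ] ExteriorAlgebra.ι ℝ v) =
        ω u₁ v • u₂ + ω u₂ v • u₁) :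
    map φ (piece m 2 1 ⊓ LinearMap.ker π) = ⊤ := by
  refine eq_top_of_forall_triple_mem halt hsep _ fun a b c => ?_
  refine ⟨(lin a * lin b) ⊗ₜ[ℝ] ExteriorAlgebra.ι ℝ c -
      (lin a * lin c) ⊗ₜ[ℝ] ExteriorAlgebra.ι ℝ b,
    ⟨sub_mem (tmul_mem_piece_two_one a b c) (tmul_mem_piece_two_one a c b), ?_⟩, ?_⟩
  · rw [SetLike.mem_coe, LinearMap.mem_ker, map_sub, hπ, hπ, sub_eq_zero, mul_right_comm]
  · rw [map_sub, hφ, hφ, ← halt.neg b c]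
    module

theorem three_mul_finrank_piece_inf_ker_inf_ker
    (ω : (Fin m → ℝ) →ₗ[ℝ] (Fin m → ℝ) →ₗ[ℝ] ℝ) (halt : ω.IsAlt)
    (hsep : ω.SeparatingLeft) (π : MM m →ₗ[ℝ] MvPolynomial (Fin m) ℝ)
    (hπ : ∀ u₁ u₂ v : Fin m → ℝ,
      π ((lin u₁ * lin u₂) ⊗ₜ[ℝ] ExteriorAlgebra.ι ℝ v) =
        (1 / 3 : ℝ) • (lin u₁ * lin u₂ * lin v))
    (φ : MM m →ₗ[ℝ] (Fin m → ℝ))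
    (hφ : ∀ u₁ u₂ v : Fin m → ℝ,
      φ ((lin u₁ * lin u₂) ⊗ₜ[ℝ] ExteriorAlgebra.ι ℝ v) =
        ω u₁ v • u₂ + ω u₂ v • u₁) :
    3 * finrank ℝ ↥(piece m 2 1 ⊓ LinearMap.ker φ ⊓ LinearMap.ker π) + 4 * m = m ^ 3 := by
  have hπ_rank := (piece m 2 1).finrank_map_add_finrank_inf_ker π
  have hφ_rank := (piece m 2 1 ⊓ LinearMap.ker π).finrank_map_add_finrank_inf_ker φ
  rw [map_piece_two_one π hπ, finrank_span_range_symProd, finrank_piece_one] at hπ_rank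
  rw [map_piece_two_one_inf_ker_eq_top ω halt hsep π hπ φ hφ, finrank_top,
    finrank_fin_fun] at hφ_rank
  rw [inf_right_comm]
  exact three_mul_add_four_mul_eq_cube m _ (by simpa [← hφ_rank] using hπ_rank)

end Pieces

/-- The irreducible summand `𝒜' = ker φ ∩ ker π ⊆ S²V ⊗ V` has dimension
`(m³ − 4m)/3 = (8/3)(n³ − n)`, where `m = dim V = 2n`. -/
theorem stmt8 (n : ℕ)
    (ω : (Fin (2 * n) → ℝ) →ₗ[ℝ] (Fin (2 * n) → ℝ) →ₗ[ℝ] ℝ)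
    (halt : ∀ x, ω x x = 0)
    (hnd : ∀ x, (∀ y, ω x y = 0) → x = 0)
    (π : MM (2 * n) →ₗ[ℝ] MvPolynomial (Fin (2 * n)) ℝ)
    (hπ : ∀ u₁ u₂ v : Fin (2 * n) → ℝ,
      π ((lin u₁ * lin u₂) ⊗ₜ[ℝ] ExteriorAlgebra.ι ℝ v) =
        (1 / 3 : ℝ) • (lin u₁ * lin u₂ * lin v))
    (φ : MM (2 * n) →ₗ[ℝ] (Fin (2 * n) → ℝ))
    (hφ : ∀ u₁ u₂ v : Fin (2 * n) → ℝ,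
      φ ((lin u₁ * lin u₂) ⊗ₜ[ℝ] ExteriorAlgebra.ι ℝ v) =
        ω u₁ v • u₂ + ω u₂ v • u₁) :
    3 * Module.finrank ℝ
        ↥(piece (2 * n) 2 1 ⊓ LinearMap.ker φ ⊓ LinearMap.ker π) =
      8 * (n ^ 3 - n) := by
  have h := three_mul_finrank_piece_inf_ker_inf_ker ω halt hnd π hπ φ hφ
  ring_nf at h
  omega

end
end

section
/- The endomorphism χ of S^2V ⊗ V defined by χ(u_1u_2 ⊗ v) = v u_2 ⊗ u_1 + v u_1 ⊗ u_2 satisfies χ² − χ − 2·Id = 0; moreover A_1(S^3V) is contained in the eigenspace of χ for eigenvalue 2, and ker π is contained in the eigenspace for eigenvalue −1. -/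
/- Koszul differential A_{p,q} : SᵖV ⊗ Λ^{q-1}V → S^{p-1}V ⊗ ΛᵠV satisfies
   A_{p-1,q+1} ∘ A_{p,q} = 0.  We model the symmetric algebra of V = ℝᵐ as
   `MvPolynomial (Fin m) ℝ` (products of linear forms are the decomposable
   symmetric tensors) and the exterior algebra by `ExteriorAlgebra`.  The
   (total) Koszul map `A` is any linear map satisfying the defining formula on
   decomposable elements; these span everything, so `A` is the Koszul
   differential and the claim is `A ∘ A = 0`. -/

open TensorProduct

set_option synthInstance.maxHeartbeats 1000000
set_option maxHeartbeats 1000000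

noncomputable section

lemma pderiv_lin {m : ℕ} (i : Fin m) (u : Fin m → ℝ) :
    MvPolynomial.pderiv i (lin u) = MvPolynomial.C (u i) := by
  simp [lin, MvPolynomial.pderiv_X, Pi.single_apply, Finset.sum_ite_eq']

def Laux (m : ℕ) : MvPolynomial (Fin m) ℝ →ₗ[ℝ] MM m :=
  ∑ i : Fin m,
    ((TensorProduct.mk ℝ (MvPolynomial (Fin m) ℝ) (ExteriorAlgebra ℝ (Fin m → ℝ))).flip
        (ExteriorAlgebra.ι ℝ ((Pi.single i 1 : Fin m → ℝ)))) ∘ₗ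
      (MvPolynomial.pderiv (R := ℝ) i).toLinearMap

lemma sum_single {m : ℕ} (a : Fin m → ℝ) (g : MvPolynomial (Fin m) ℝ) :
    ∑ i, (MvPolynomial.C (a i) * g) ⊗ₜ[ℝ] ExteriorAlgebra.ι ℝ ((Pi.single i 1 : Fin m → ℝ)) =
      g ⊗ₜ[ℝ] ExteriorAlgebra.ι ℝ a := by
  have h : ∀ i : Fin m, (MvPolynomial.C (a i) * g) ⊗ₜ[ℝ] ExteriorAlgebra.ι ℝ ((Pi.single i 1 : Fin m → ℝ))
      = g ⊗ₜ[ℝ] ExteriorAlgebra.ι ℝ (Pi.single i (a i)) := by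
    intro i
    rw [← MvPolynomial.smul_eq_C_mul, smul_tmul, ← map_smul]
    have hs : a i • (Pi.single i 1 : Fin m → ℝ) = Pi.single i (a i) := by
      ext j; simp [Pi.single_apply, mul_comm]
    rw [hs]
  rw [Finset.sum_congr rfl fun i _ => h i, ← tmul_sum, ← map_sum,
    Finset.univ_sum_single]

lemma Laux_cubic {m : ℕ} (a b c : Fin m → ℝ) :
    Laux m (lin a * lin b * lin c) =
      (lin b * lin c) ⊗ₜ[ℝ] ExteriorAlgebra.ι ℝ a +
      (lin a * lin c) ⊗ₜ[ℝ] ExteriorAlgebra.ι ℝ b +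
      (lin a * lin b) ⊗ₜ[ℝ] ExteriorAlgebra.ι ℝ c := by
  have hp : ∀ i : Fin m, MvPolynomial.pderiv i (lin a * lin b * lin c) =
      MvPolynomial.C (a i) * (lin b * lin c) + MvPolynomial.C (b i) * (lin a * lin c) +
      MvPolynomial.C (c i) * (lin a * lin b) := by
    intro i
    simp only [MvPolynomial.pderiv_mul, pderiv_lin]
    ring
  simp only [Laux, LinearMap.sum_apply, LinearMap.comp_apply, LinearMap.coe_coe,
    TensorProduct.mk_apply, LinearMap.flip_apply]
  calc ∑ i, (TensorProduct.mk ℝ _ _) ((MvPolynomial.pderiv i) (lin a * lin b * lin c))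
        (ExteriorAlgebra.ι ℝ ((Pi.single i 1 : Fin m → ℝ)))
      = ∑ i : Fin m, ((MvPolynomial.C (a i) * (lin b * lin c)) ⊗ₜ[ℝ]
          ExteriorAlgebra.ι ℝ ((Pi.single i 1 : Fin m → ℝ)) +
        (MvPolynomial.C (b i) * (lin a * lin c)) ⊗ₜ[ℝ] ExteriorAlgebra.ι ℝ ((Pi.single i 1 : Fin m → ℝ)) +
        (MvPolynomial.C (c i) * (lin a * lin b)) ⊗ₜ[ℝ] ExteriorAlgebra.ι ℝ ((Pi.single i 1 : Fin m → ℝ))) := by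
        refine Finset.sum_congr rfl fun i _ => ?_
        rw [TensorProduct.mk_apply, hp i, add_tmul, add_tmul]
    _ = _ := by
        rw [Finset.sum_add_distrib, Finset.sum_add_distrib, sum_single, sum_single, sum_single]

/-- The endomorphism `χ(u₁u₂ ⊗ v) = vu₂ ⊗ u₁ + vu₁ ⊗ u₂` of `S²V ⊗ V`
satisfies `χ² − χ − 2·Id = 0`; moreover `A₁(S³V)` lies in the `2`-eigenspace
and `ker π` in the `(−1)`-eigenspace. -/
theorem stmt9 (m : ℕ) (hm : 2 ≤ m)
    (χ : MM m →ₗ[ℝ] MM m)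
    (hχ : ∀ u₁ u₂ v : Fin m → ℝ,
      χ ((lin u₁ * lin u₂) ⊗ₜ[ℝ] ExteriorAlgebra.ι ℝ v) =
        (lin v * lin u₂) ⊗ₜ[ℝ] ExteriorAlgebra.ι ℝ u₁ +
        (lin v * lin u₁) ⊗ₜ[ℝ] ExteriorAlgebra.ι ℝ u₂)
    (π : MM m →ₗ[ℝ] MvPolynomial (Fin m) ℝ)
    (hπ : ∀ u₁ u₂ v : Fin m → ℝ,
      π ((lin u₁ * lin u₂) ⊗ₜ[ℝ] ExteriorAlgebra.ι ℝ v) =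
        (1 / 3 : ℝ) • (lin u₁ * lin u₂ * lin v)) :
    (∀ x ∈ piece m 2 1, χ (χ x) - χ x - (2 : ℝ) • x = 0) ∧
    (∀ u₁ u₂ u₃ : Fin m → ℝ,
      χ ((lin u₂ * lin u₃) ⊗ₜ[ℝ] ExteriorAlgebra.ι ℝ u₁ +
         (lin u₁ * lin u₃) ⊗ₜ[ℝ] ExteriorAlgebra.ι ℝ u₂ +
         (lin u₁ * lin u₂) ⊗ₜ[ℝ] ExteriorAlgebra.ι ℝ u₃) =
        (2 : ℝ) • ((lin u₂ * lin u₃) ⊗ₜ[ℝ] ExteriorAlgebra.ι ℝ u₁ +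
          (lin u₁ * lin u₃) ⊗ₜ[ℝ] ExteriorAlgebra.ι ℝ u₂ +
          (lin u₁ * lin u₂) ⊗ₜ[ℝ] ExteriorAlgebra.ι ℝ u₃)) ∧
    (∀ x ∈ piece m 2 1, π x = 0 → χ x = -x) := by
  have gen_eq : ∀ (u : Fin 2 → Fin m → ℝ) (v : Fin 1 → Fin m → ℝ),
      dec u v = (lin (u 0) * lin (u 1)) ⊗ₜ[ℝ] ExteriorAlgebra.ι ℝ (v 0) := by
    intro u v
    simp [dec, symProd, wdg, Fin.prod_univ_two, List.ofFn_succ]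
  refine ⟨?_, ?_, ?_⟩
  · -- χ² − χ − 2 = 0 on the piece
    have hker : piece m 2 1 ≤ LinearMap.ker (χ ∘ₗ χ - χ - (2 : ℝ) • LinearMap.id) := by
      rw [piece, Submodule.span_le]
      rintro x ⟨u, v, rfl⟩
      rw [SetLike.mem_coe, LinearMap.mem_ker, gen_eq]
      simp only [LinearMap.sub_apply, LinearMap.comp_apply, LinearMap.smul_apply,
        LinearMap.id_apply]
      rw [hχ, map_add, hχ, hχ, two_smul]
      rw [show lin (u 1) * lin (u 0) = lin (u 0) * lin (u 1) from mul_comm _ _,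
          show lin (u 0) * lin (v 0) = lin (v 0) * lin (u 0) from mul_comm _ _,
          show lin (u 1) * lin (v 0) = lin (v 0) * lin (u 1) from mul_comm _ _]
      abel
    intro x hx
    have := hker hx
    rw [LinearMap.mem_ker] at this
    simpa using this
  · intro u₁ u₂ u₃
    rw [map_add, map_add, hχ, hχ, hχ, two_smul]
    rw [show lin u₁ * lin u₃ = lin u₃ * lin u₁ from mul_comm _ _,
        show lin u₂ * lin u₁ = lin u₁ * lin u₂ from mul_comm _ _,
        show lin u₂ * lin u₃ = lin u₃ * lin u₂ from mul_comm _ _]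
    abel
  · -- kernel of π lies in the (−1)-eigenspace
    have hker : piece m 2 1 ≤
        LinearMap.ker (LinearMap.id + χ - (3 : ℝ) • (Laux m ∘ₗ π)) := by
      rw [piece, Submodule.span_le]
      rintro x ⟨u, v, rfl⟩
      rw [SetLike.mem_coe, LinearMap.mem_ker, gen_eq]
      simp only [LinearMap.sub_apply, LinearMap.add_apply, LinearMap.comp_apply,
        LinearMap.smul_apply, LinearMap.id_apply]
      rw [hχ, hπ, map_smul, Laux_cubic, smul_smul]
      norm_num
      rw [show lin (u 1) * lin (v 0) = lin (v 0) * lin (u 1) from mul_comm _ _,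
          show lin (u 0) * lin (v 0) = lin (v 0) * lin (u 0) from mul_comm _ _]
      abel
    intro x hx hπx
    have := hker hx
    rw [LinearMap.mem_ker] at this
    simp only [LinearMap.sub_apply, LinearMap.add_apply, LinearMap.comp_apply,
      LinearMap.smul_apply, LinearMap.id_apply, hπx, map_zero, smul_zero, sub_zero] at this
    linear_combination (norm := module) this
end
end

section
/- Under the inclusion Λ³V ↪ V ⊗ Λ²V and the map C: V ⊗ Λ²V → V, C(v ⊗ u∧w) = ω(u,w)v + ω(v,u)w − ω(v,w)u, every element of Λ³V of the form v ∧ ω (i.e. v ⊗ ω plus cyclic terms corresponding to A_3(v ⊗ ω) = ω ∧ v) satisfies C(v ⊗ ω) = (n−1)v, and every f ∈ Λ³V satisfies C²(f) = (n−1)·C(f). -/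
/- Koszul differential A_{p,q} : SᵖV ⊗ Λ^{q-1}V → S^{p-1}V ⊗ ΛᵠV satisfies
   A_{p-1,q+1} ∘ A_{p,q} = 0.  We model the symmetric algebra of V = ℝᵐ as
   `MvPolynomial (Fin m) ℝ` (products of linear forms are the decomposable
   symmetric tensors) and the exterior algebra by `ExteriorAlgebra`.  The
   (total) Koszul map `A` is any linear map satisfying the defining formula on
   decomposable elements; these span everything, so `A` is the Koszul
   differential and the claim is `A ∘ A = 0`. -/

open TensorProduct

set_option synthInstance.maxHeartbeats 1000000
set_option maxHeartbeats 1000000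

noncomputable section

/-- The image of the decomposable 3-form `v₁ ∧ v₂ ∧ v₃` under the standard
embedding `Λ³V ↪ V ⊗ Λ²V` (cyclic sum). -/
def embL3 {m : ℕ} (v₁ v₂ v₃ : Fin m → ℝ) : MM m :=
  (lin v₁) ⊗ₜ[ℝ] (ExteriorAlgebra.ι ℝ v₂ * ExteriorAlgebra.ι ℝ v₃) +
  (lin v₂) ⊗ₜ[ℝ] (ExteriorAlgebra.ι ℝ v₃ * ExteriorAlgebra.ι ℝ v₁) +
  (lin v₃) ⊗ₜ[ℝ] (ExteriorAlgebra.ι ℝ v₁ * ExteriorAlgebra.ι ℝ v₂)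

/-- `Λ³V` inside `V ⊗ Λ²V`. -/
def L3 (m : ℕ) : Submodule ℝ (MM m) :=
  Submodule.span ℝ {x | ∃ v₁ v₂ v₃ : Fin m → ℝ, x = embL3 v₁ v₂ v₃}

/- In a symplectic basis `(eᵢ, fᵢ)` every vector expands as `v = ∑ᵢ ω(v, fᵢ) eᵢ - ω(v, eᵢ) fᵢ`.
Each summand of `C(v ⊗ ∑ᵢ eᵢ ∧ fᵢ)` is `ω(eᵢ, fᵢ) v + ω(v, eᵢ) fᵢ - ω(v, fᵢ) eᵢ`, i.e. `v` minus
the `i`-th term of that expansion, so the sum is `n v - v`. The statement about `C²` is the same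
identity applied to the vector `C f`. -/

section

variable {K V : Type*} [CommRing K] [AddCommGroup V] [Module K V]

def symplecticBivector (n : ℕ) (e : Fin (n + n) → V) : ExteriorAlgebra K V :=
  ∑ i : Fin n, ExteriorAlgebra.ι K (e (Fin.castAdd n i)) * ExteriorAlgebra.ι K (e (Fin.natAdd n i))

theorem Module.Basis.sum_symplectic_repr {n : ℕ} {ω : V →ₗ[K] V →ₗ[K] K} (hω : ω.IsAlt)
    (b : Module.Basis (Fin (n + n)) K V)
    (hee : ∀ i j : Fin n, ω (b (Fin.castAdd n i)) (b (Fin.castAdd n j)) = 0)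
    (hef : ∀ i j : Fin n, ω (b (Fin.castAdd n i)) (b (Fin.natAdd n j)) = if i = j then 1 else 0)
    (hff : ∀ i j : Fin n, ω (b (Fin.natAdd n i)) (b (Fin.natAdd n j)) = 0) (v : V) :
    ∑ i, (ω v (b (Fin.natAdd n i)) • b (Fin.castAdd n i) -
      ω v (b (Fin.castAdd n i)) • b (Fin.natAdd n i)) = v := by
  have hfe : ∀ i j : Fin n, ω (b (Fin.natAdd n i)) (b (Fin.castAdd n j)) =
      -if j = i then 1 else 0 := fun i j => by rw [← hω.neg, hef]
  have hexp : ∑ i, ((ω.flip (b (Fin.natAdd n i))).smulRight (b (Fin.castAdd n i)) -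
      (ω.flip (b (Fin.castAdd n i))).smulRight (b (Fin.natAdd n i))) = LinearMap.id := by
    simp only [Fin.natAdd_eq_addNat] at hef hff hfe ⊢
    refine b.ext fun k => Fin.addCases (fun j => ?_) (fun j => ?_) k <;>
      simp [hee, hef, hff, hfe]
  simpa using LinearMap.congr_fun hexp v

end

theorem contraction_tmul_symplecticBivector {n : ℕ}
    {ω : (Fin (n + n) → ℝ) →ₗ[ℝ] (Fin (n + n) → ℝ) →ₗ[ℝ] ℝ} (hω : ω.IsAlt)
    (b : Module.Basis (Fin (n + n)) ℝ (Fin (n + n) → ℝ))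
    (hee : ∀ i j : Fin n, ω (b (Fin.castAdd n i)) (b (Fin.castAdd n j)) = 0)
    (hef : ∀ i j : Fin n, ω (b (Fin.castAdd n i)) (b (Fin.natAdd n j)) = if i = j then 1 else 0)
    (hff : ∀ i j : Fin n, ω (b (Fin.natAdd n i)) (b (Fin.natAdd n j)) = 0)
    {C : MM (n + n) →ₗ[ℝ] (Fin (n + n) → ℝ)}
    (hC : ∀ v u w : Fin (n + n) → ℝ,
      C ((lin v) ⊗ₜ[ℝ] (ExteriorAlgebra.ι ℝ u * ExteriorAlgebra.ι ℝ w)) =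
        ω u w • v + ω v u • w - ω v w • u) (v : Fin (n + n) → ℝ) :
    C (lin v ⊗ₜ[ℝ] symplecticBivector n ⇑b) = ((n : ℝ) - 1) • v := by
  have hterm : ∀ i : Fin n,
      C (lin v ⊗ₜ[ℝ] (ExteriorAlgebra.ι ℝ (b (Fin.castAdd n i)) *
        ExteriorAlgebra.ι ℝ (b (Fin.natAdd n i)))) =
      v - (ω v (b (Fin.natAdd n i)) • b (Fin.castAdd n i) -
        ω v (b (Fin.castAdd n i)) • b (Fin.natAdd n i)) := fun i => by
    rw [hC, hef, if_pos rfl, one_smul]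
    abel
  rw [symplecticBivector, tmul_sum, map_sum, Finset.sum_congr rfl fun i _ => hterm i,
    Finset.sum_sub_distrib, b.sum_symplectic_repr hω hee hef hff, Finset.sum_const,
    Finset.card_univ, Fintype.card_fin, ← Nat.cast_smul_eq_nsmul ℝ, sub_smul, one_smul]

theorem stmt11_general (n : ℕ)
    (ω : (Fin (n + n) → ℝ) →ₗ[ℝ] (Fin (n + n) → ℝ) →ₗ[ℝ] ℝ)
    (halt : ∀ x, ω x x = 0)
    (e : Fin (n + n) → Fin (n + n) → ℝ)
    (hb : ∃ b : Module.Basis (Fin (n + n)) ℝ (Fin (n + n) → ℝ), ⇑b = e)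
    (hee : ∀ i j : Fin n, ω (e (Fin.castAdd n i)) (e (Fin.castAdd n j)) = 0)
    (hef : ∀ i j : Fin n, ω (e (Fin.castAdd n i)) (e (Fin.natAdd n j)) =
      if i = j then 1 else 0)
    (hff : ∀ i j : Fin n, ω (e (Fin.natAdd n i)) (e (Fin.natAdd n j)) = 0)
    (C : MM (n + n) →ₗ[ℝ] (Fin (n + n) → ℝ))
    (hC : ∀ v u w : Fin (n + n) → ℝ,
      C ((lin v) ⊗ₜ[ℝ] (ExteriorAlgebra.ι ℝ u * ExteriorAlgebra.ι ℝ w)) =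
        ω u w • v + ω v u • w - ω v w • u) :
    (∀ v : Fin (n + n) → ℝ,
      C ((lin v) ⊗ₜ[ℝ] ∑ i : Fin n,
          ExteriorAlgebra.ι ℝ (e (Fin.castAdd n i)) *
            ExteriorAlgebra.ι ℝ (e (Fin.natAdd n i))) = ((n : ℝ) - 1) • v) ∧
    (∀ f ∈ L3 (n + n),
      C ((lin (C f)) ⊗ₜ[ℝ] ∑ i : Fin n,
          ExteriorAlgebra.ι ℝ (e (Fin.castAdd n i)) *
            ExteriorAlgebra.ι ℝ (e (Fin.natAdd n i))) = ((n : ℝ) - 1) • C f) := by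
  obtain ⟨b, rfl⟩ := hb
  have key := contraction_tmul_symplecticBivector halt b hee hef hff hC
  exact ⟨key, fun f _ => key (C f)⟩

/-- With `ω = ∑ᵢ eᵢ ∧ e_{i+n}` the symplectic bivector, `C(v ⊗ ω) = (n−1)v`,
and consequently `C²(f) = (n−1)·C(f)` for every `f ∈ Λ³V` (where `V` is viewed
inside `Λ³V` via `v ↦ v ⊗ ω`). -/
theorem stmt11 (n : ℕ) (hn : 2 ≤ n)
    (ω : (Fin (n + n) → ℝ) →ₗ[ℝ] (Fin (n + n) → ℝ) →ₗ[ℝ] ℝ)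
    (halt : ∀ x, ω x x = 0)
    (hnd : ∀ x, (∀ y, ω x y = 0) → x = 0)
    (e : Fin (n + n) → Fin (n + n) → ℝ)
    (hb : ∃ b : Module.Basis (Fin (n + n)) ℝ (Fin (n + n) → ℝ), ⇑b = e)
    (hee : ∀ i j : Fin n, ω (e (Fin.castAdd n i)) (e (Fin.castAdd n j)) = 0)
    (hef : ∀ i j : Fin n, ω (e (Fin.castAdd n i)) (e (Fin.natAdd n j)) =
      if i = j then 1 else 0)
    (hff : ∀ i j : Fin n, ω (e (Fin.natAdd n i)) (e (Fin.natAdd n j)) = 0)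
    (C : MM (n + n) →ₗ[ℝ] (Fin (n + n) → ℝ))
    (hC : ∀ v u w : Fin (n + n) → ℝ,
      C ((lin v) ⊗ₜ[ℝ] (ExteriorAlgebra.ι ℝ u * ExteriorAlgebra.ι ℝ w)) =
        ω u w • v + ω v u • w - ω v w • u) :
    (∀ v : Fin (n + n) → ℝ,
      C ((lin v) ⊗ₜ[ℝ] ∑ i : Fin n,
          ExteriorAlgebra.ι ℝ (e (Fin.castAdd n i)) *
            ExteriorAlgebra.ι ℝ (e (Fin.natAdd n i))) = ((n : ℝ) - 1) • v) ∧
    (∀ f ∈ L3 (n + n),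
      C ((lin (C f)) ⊗ₜ[ℝ] ∑ i : Fin n,
          ExteriorAlgebra.ι ℝ (e (Fin.castAdd n i)) *
            ExteriorAlgebra.ι ℝ (e (Fin.natAdd n i))) = ((n : ℝ) - 1) • C f) :=
  stmt11_general n ω halt e hb hee hef hff C hC
end
end
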